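/- Let X be a finite set and let μ₀ be a first-order Markov chain on X with transition kernel P(a|b) > 0 and initial distribution π(b) > 0. Let P̂, π̂ satisfy |P̂(a|b) − P(a|b)| < δ for all (b,a) and |π̂(b) − π(b)| < δ' for all b, with 0 < δ < min_{b,a} P(a|b) and 0 < δ' < min_b π(b). For a string x₁…x_n with probabilities μ₀(x₁ⁿ) = π(x₁)∏_{i=2}^n P(x_i|x_{i−1}) and μ̂₀(x₁ⁿ) = π̂(x₁)∏_{i=2}^n P̂(x_i|x_{i−1}), define f_n(x₁ⁿ) = (1/n) log₂(μ₀(x₁ⁿ)/μ̂₀(x₁ⁿ)). Then f_n(x₁ⁿ) ≤ log₂ β' + log₂ β'' = log₂ β, where β' = P(a*|b*)/(P(a*|b*) − δ) with (b*,a*) the minimum-probability transition pair, and β'' = π(b*)/(π(b*) − δ') with b* the minimum-probability initial symbol. -/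

import Mathlib

open Real Finset in
/-- Lemma 2: bound on the normalized log-likelihood mismatch f_n for a first-order
Markov source, in terms of the minimum-probability transition pair and initial symbol. -/
theorem stmt_5 {X : Type*} [Fintype X] [Nonempty X]
    (P Phat : X → X → ℝ) (pi pihat : X → ℝ) (δ δ' : ℝ)
    (hδ : 0 < δ) (hδ' : 0 < δ')
    (hPpos : ∀ b a, δ < P b a) (hπpos : ∀ b, δ' < pi b)
    (hPstoch : ∀ b, ∑ a, P b a = 1) (hπsum : ∑ b, pi b = 1)
    (hPest : ∀ b a, |Phat b a - P b a| < δ) (hπest : ∀ b, |pihat b - pi b| < δ')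
    (bs as : X) (hmin : ∀ b a, P bs as ≤ P b a)
    (bs' : X) (hmin' : ∀ b, pi bs' ≤ pi b)
    (n : ℕ) (hn : 1 ≤ n) (x : ℕ → X) :
    (1 / (n:ℝ)) * Real.logb 2
        ((pi (x 0) * ∏ i ∈ Finset.Ico 1 n, P (x (i-1)) (x i)) /
         (pihat (x 0) * ∏ i ∈ Finset.Ico 1 n, Phat (x (i-1)) (x i)))
      ≤ Real.logb 2 (P bs as / (P bs as - δ)) + Real.logb 2 (pi bs' / (pi bs' - δ'))
    ∧ Real.logb 2 (P bs as / (P bs as - δ)) + Real.logb 2 (pi bs' / (pi bs' - δ'))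
      = Real.logb 2 ((P bs as / (P bs as - δ)) * (pi bs' / (pi bs' - δ'))) := by
  have hPmδ : 0 < P bs as - δ := sub_pos.mpr (hPpos bs as)
  have hπmδ : 0 < pi bs' - δ' := sub_pos.mpr (hπpos bs')
  have hβ'pos : 0 < P bs as / (P bs as - δ) := div_pos (hδ.trans (hPpos bs as)) hPmδ
  have hβ''pos : 0 < pi bs' / (pi bs' - δ') := div_pos (hδ'.trans (hπpos bs')) hπmδ
  have hβ'1 : 1 ≤ P bs as / (P bs as - δ) := (one_le_div hPmδ).mpr (by linarith)
  have hβ''1 : 1 ≤ pi bs' / (pi bs' - δ') := (one_le_div hπmδ).mpr (by linarith)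
  have hlβ' : 0 ≤ Real.logb 2 (P bs as / (P bs as - δ)) := Real.logb_nonneg one_lt_two hβ'1
  have hlβ'' : 0 ≤ Real.logb 2 (pi bs' / (pi bs' - δ')) := Real.logb_nonneg one_lt_two hβ''1
  refine ⟨?_, (Real.logb_mul (ne_of_gt hβ'pos) (ne_of_gt hβ''pos)).symm⟩
  have hPhatpos : ∀ b a, 0 < Phat b a := fun b a => by
    have := abs_lt.mp (hPest b a); linarith [hPpos b a]
  have hπhatpos : ∀ b, 0 < pihat b := fun b => by
    have := abs_lt.mp (hπest b); linarith [hπpos b]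
  have hfactor : ∀ b a, P b a / Phat b a ≤ P bs as / (P bs as - δ) := by
    intro b a
    have h1 := abs_lt.mp (hPest b a)
    have hP : 0 < P b a := hδ.trans (hPpos b a)
    have hm := hmin b a
    rw [div_le_div_iff₀ (hPhatpos b a) hPmδ]
    nlinarith
  have hπfactor : pi (x 0) / pihat (x 0) ≤ pi bs' / (pi bs' - δ') := by
    have h1 := abs_lt.mp (hπest (x 0))
    have hP : 0 < pi (x 0) := hδ'.trans (hπpos (x 0))
    have hm := hmin' (x 0)
    rw [div_le_div_iff₀ (hπhatpos (x 0)) hπmδ]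
    nlinarith
  have hratio : (pi (x 0) * ∏ i ∈ Finset.Ico 1 n, P (x (i-1)) (x i)) /
      (pihat (x 0) * ∏ i ∈ Finset.Ico 1 n, Phat (x (i-1)) (x i))
      = (pi (x 0) / pihat (x 0)) * ∏ i ∈ Finset.Ico 1 n, (P (x (i-1)) (x i) / Phat (x (i-1)) (x i)) := by
    rw [Finset.prod_div_distrib, mul_div_mul_comm]
  have hratiopos : 0 < (pi (x 0) / pihat (x 0)) * ∏ i ∈ Finset.Ico 1 n, (P (x (i-1)) (x i) / Phat (x (i-1)) (x i)) := by
    apply mul_pos (div_pos (hδ'.trans (hπpos (x 0))) (hπhatpos (x 0)))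
    exact Finset.prod_pos fun i _ => div_pos (hδ.trans (hPpos _ _)) (hPhatpos _ _)
  have hbound : (pi (x 0) / pihat (x 0)) * ∏ i ∈ Finset.Ico 1 n, (P (x (i-1)) (x i) / Phat (x (i-1)) (x i))
      ≤ (pi bs' / (pi bs' - δ')) * (P bs as / (P bs as - δ)) ^ (n - 1) := by
    have hprod : ∏ i ∈ Finset.Ico 1 n, (P (x (i-1)) (x i) / Phat (x (i-1)) (x i))
        ≤ (P bs as / (P bs as - δ)) ^ (n - 1) := by
      have := Finset.prod_le_prod (f := fun i => P (x (i-1)) (x i) / Phat (x (i-1)) (x i))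
        (g := fun _ => P bs as / (P bs as - δ)) (s := Finset.Ico 1 n)
        (fun i _ => le_of_lt (div_pos (hδ.trans (hPpos _ _)) (hPhatpos _ _)))
        (fun i _ => hfactor _ _)
      simpa [Nat.card_Ico, div_pow] using this
    have h0 : 0 ≤ ∏ i ∈ Finset.Ico 1 n, (P (x (i-1)) (x i) / Phat (x (i-1)) (x i)) :=
      le_of_lt (Finset.prod_pos fun i _ => div_pos (hδ.trans (hPpos _ _)) (hPhatpos _ _))
    have h2 : 0 ≤ pi (x 0) / pihat (x 0) := le_of_lt (div_pos (hδ'.trans (hπpos (x 0))) (hπhatpos (x 0)))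
    exact mul_le_mul hπfactor hprod h0 (le_trans h2 hπfactor)
  have hlog : Real.logb 2 ((pi (x 0) * ∏ i ∈ Finset.Ico 1 n, P (x (i-1)) (x i)) /
      (pihat (x 0) * ∏ i ∈ Finset.Ico 1 n, Phat (x (i-1)) (x i)))
      ≤ Real.logb 2 (pi bs' / (pi bs' - δ')) + (n - 1 : ℕ) * Real.logb 2 (P bs as / (P bs as - δ)) := by
    rw [hratio]
    calc Real.logb 2 _ ≤ Real.logb 2 ((pi bs' / (pi bs' - δ')) * (P bs as / (P bs as - δ)) ^ (n - 1)) :=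
          Real.logb_le_logb_of_le one_lt_two hratiopos hbound
      _ = _ := by
          rw [Real.logb_mul (ne_of_gt hβ''pos) (ne_of_gt (pow_pos hβ'pos _)), Real.logb_pow]
  have hnpos : (0:ℝ) < (n:ℝ) := by exact_mod_cast hn
  have hcast : ((n - 1 : ℕ) : ℝ) = (n:ℝ) - 1 := by
    rw [Nat.cast_sub hn]; simp
  have := mul_le_mul_of_nonneg_left hlog (le_of_lt (one_div_pos.mpr hnpos))
  refine this.trans ?_
  rw [hcast]
  rw [div_mul_eq_mul_div, div_le_iff₀ hnpos]
  nlinarith
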